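/- Let ψ ∈ ℂ² be any vector, let β = (1/√2)·(|00⟩ + |11⟩) ∈ ℂ⁴ be the Bell state, let H be the Hadamard matrix (1/√2)·[[1,1],[1,−1]], let CNOT ∈ Mat₄(ℂ) be the controlled-not gate, and let X, Z be the Pauli matrices. Then for each (i,j) ∈ {0,1}², ((⟨i| ⊗ ⟨j|) ⊗ Zⁱ·Xʲ) applied to (H ⊗ I₄)·(CNOT ⊗ I₂)·(ψ ⊗ β) equals (1/2)·ψ. In particular, when ψ is a unit vector each measurement outcome (i,j) occurs with probability 1/4 and the corrected state of the third qubit equals ψ. -/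

import Mathlib

set_option maxHeartbeats 1000000


open Matrix

/-- Correctness of quantum teleportation. The three-qubit register is indexed by
`Fin 2 × Fin 2 × Fin 2` (Alice's qubit `ψ`, then the shared Bell pair `β`).
After applying `CNOT ⊗ I₂` and `H ⊗ I₄`, for each measurement outcome
`(i, j) ∈ {0,1}²` the operator `(⟨i| ⊗ ⟨j|) ⊗ (Zⁱ·Xʲ)` (projection of Alice's two
qubits on `|ij⟩` together with Bob's Pauli correction) applied to the resulting
state yields `(1/2) • ψ`; in particular, when `ψ` is a unit vector each outcome
occurs with probability `1/4` and the corrected state of the third qubit is `ψ`. -/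
theorem quantum_teleportation_correct
    (ψ : Fin 2 → ℂ)
    (β : Fin 2 × Fin 2 → ℂ)
    (hβ : β = fun p => if p.1 = p.2 then ((1 / Real.sqrt 2 : ℝ) : ℂ) else 0)
    (H X Z : Matrix (Fin 2) (Fin 2) ℂ)
    (hH : H = ((1 / Real.sqrt 2 : ℝ) : ℂ) • !![1, 1; 1, -1])
    (hX : X = !![0, 1; 1, 0])
    (hZ : Z = !![1, 0; 0, -1])
    (CNOT : Matrix (Fin 2 × Fin 2) (Fin 2 × Fin 2) ℂ)
    (hCNOT : CNOT = Matrix.of fun p q =>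
      if p.1 = q.1 ∧ p.2 = q.1 + q.2 then 1 else 0)
    -- `CNOT ⊗ I₂` acting on qubits 1,2 of the three-qubit register
    (CN12 : Matrix (Fin 2 × Fin 2 × Fin 2) (Fin 2 × Fin 2 × Fin 2) ℂ)
    (hCN12 : CN12 = Matrix.of fun p q =>
      CNOT (p.1, p.2.1) (q.1, q.2.1) * (if p.2.2 = q.2.2 then 1 else 0))
    -- `H ⊗ I₄` acting on qubit 1 of the three-qubit register
    (H1 : Matrix (Fin 2 × Fin 2 × Fin 2) (Fin 2 × Fin 2 × Fin 2) ℂ)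
    (hH1 : H1 = Matrix.of fun p q =>
      H p.1 q.1 * (if p.2 = q.2 then 1 else 0))
    -- the state after Alice's gates, starting from `ψ ⊗ β`
    (state : Fin 2 × Fin 2 × Fin 2 → ℂ)
    (hstate : state = (H1 * CN12).mulVec fun p => ψ p.1 * β p.2)
    -- `(⟨i| ⊗ ⟨j|) ⊗ (Zⁱ·Xʲ)` : projection on outcome `(i,j)` with Bob's correction
    (meas : Fin 2 → Fin 2 → Matrix (Fin 2) (Fin 2 × Fin 2 × Fin 2) ℂ)
    (hmeas : ∀ i j, meas i j = Matrix.of fun k p =>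
      (if p.1 = i then 1 else 0) * (if p.2.1 = j then 1 else 0) *
        (Z ^ (i : ℕ) * X ^ (j : ℕ)) k p.2.2) :
    (∀ i j : Fin 2, (meas i j).mulVec state = (1 / 2 : ℂ) • ψ) ∧
    ((∑ k, (starRingEnd ℂ) (ψ k) * ψ k = 1) →
      ∀ i j : Fin 2, ∑ k, ‖(meas i j).mulVec state k‖ ^ 2 = 1 / 4) := by
  have h2 : ((Real.sqrt 2 : ℝ) : ℂ) * ((Real.sqrt 2 : ℝ) : ℂ) = 2 := by
    rw [← Complex.ofReal_mul, Real.mul_self_sqrt (by norm_num)]; norm_num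
  have key : ∀ i j : Fin 2, (meas i j).mulVec state = (1 / 2 : ℂ) • ψ := by
    intro i j
    funext k
    subst hβ hH hX hZ hCNOT hCN12 hH1 hstate
    rw [hmeas]
    simp only [Matrix.mulVec, Matrix.mul_apply, Matrix.of_apply, dotProduct,
      Fintype.sum_prod_type, Fin.sum_univ_two, Pi.smul_apply, smul_eq_mul,
      Matrix.smul_apply]
    have h2' : (((Real.sqrt 2 : ℝ) : ℂ))⁻¹ ^ 2 = 1 / 2 := by
      rw [sq, ← mul_inv, h2]; norm_num
    fin_cases i <;> fin_cases j <;> fin_cases k <;>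
      · simp [Matrix.one_apply, pow_succ, Matrix.mul_apply, Fin.sum_univ_two,
          Prod.ext_iff]
        ring_nf
        rw [h2']
        ring
  refine ⟨key, fun hψ i j => ?_⟩
  rw [key i j]
  have hre : ∑ k, ‖ψ k‖ ^ 2 = 1 := by
    have := congrArg Complex.re hψ
    simpa [Complex.mul_re, Complex.add_re, ← Complex.normSq_apply, Fin.sum_univ_two,
      Complex.normSq_eq_norm_sq, ← Complex.sq_norm, sq] using this
  simp only [Pi.smul_apply, smul_eq_mul, norm_mul, mul_pow, ← Finset.mul_sum, hre]
  norm_num
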